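/- Let V be a finite nonnegative compactly supported Borel measure on ℝ³ satisfying the local Kato condition. Then for each λ ∈ ℝ the operator g ↦ ∫ e^{-iλ|x−y|}/(4π|x−y|) g(y) dV(y) is a compact operator on the Banach space of bounded continuous functions on ℝ³ (equivalently, V R⁺₀(λ²) is compact on the space of finite complex Borel measures on ℝ³). -/

import Mathlib

open MeasureTheory Metric Filter BoundedContinuousFunction

noncomputable def resKernelNeg (lam : ℝ) (x y : EuclideanSpace ℝ (Fin 3)) : ℂ :=
  Complex.exp (-(Complex.I * (lam : ℂ) * (‖x - y‖ : ℝ))) /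
    ((4 * Real.pi * ‖x - y‖ : ℝ) : ℂ)

open Complex
open scoped ENNReal NNReal Topology

-- the abstract one-variable kernel
noncomputable def kfun (lam t : ℝ) : ℂ :=
  Complex.exp (-(Complex.I * (lam : ℂ) * (t : ℂ))) / ((4 * Real.pi * t : ℝ) : ℂ)

lemma resKernelNeg_eq (lam : ℝ) (x y : EuclideanSpace ℝ (Fin 3)) :
    resKernelNeg lam x y = kfun lam ‖x - y‖ := rfl

lemma norm_exp_neg_I (lam t : ℝ) : ‖Complex.exp (-(Complex.I * (lam : ℂ) * (t : ℂ)))‖ = 1 := by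
  rw [Complex.norm_exp]
  simp [Complex.mul_re]

lemma norm_kfun (lam t : ℝ) (ht : 0 ≤ t) : ‖kfun lam t‖ = (4 * Real.pi)⁻¹ * t⁻¹ := by
  rw [kfun, norm_div, norm_exp_neg_I]
  rw [Complex.norm_real, Real.norm_eq_abs, _root_.abs_of_nonneg (by positivity)]
  rw [one_div, mul_inv]

lemma norm_resKernelNeg (lam : ℝ) (x y : EuclideanSpace ℝ (Fin 3)) :
    ‖resKernelNeg lam x y‖ = (4 * Real.pi)⁻¹ * ‖x - y‖⁻¹ :=
  norm_kfun lam _ (norm_nonneg _)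

lemma exp_I_lip (c : ℝ) (s t : ℝ) :
    ‖Complex.exp (-(Complex.I * (c : ℂ) * (s : ℂ))) -
      Complex.exp (-(Complex.I * (c : ℂ) * (t : ℂ)))‖ ≤ |c| * |s - t| := by
  set f : ℝ → ℂ := fun u => Complex.exp (-(Complex.I * (c : ℂ) * (u : ℂ)))
  have hderiv : ∀ u : ℝ, HasDerivAt f
      (Complex.exp (-(Complex.I * (c : ℂ) * (u : ℂ))) * (-(Complex.I * c))) u := by
    intro u
    have h0 : HasDerivAt (fun u : ℝ => -(Complex.I * (c : ℂ) * (u : ℂ)))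
        (-(Complex.I * c)) u := by
      have := (Complex.ofRealCLM.hasDerivAt (x := u)).const_mul (Complex.I * c)
      simpa [Pi.neg_def] using this.neg
    exact h0.cexp
  have key := Convex.norm_image_sub_le_of_norm_hasDerivWithin_le
    (f := f) (f' := fun u => Complex.exp (-(Complex.I * (c : ℂ) * (u : ℂ))) * (-(Complex.I * c)))
    (fun u _ => (hderiv u).hasDerivWithinAt) (C := |c|)
    (fun u _ => by
      rw [norm_mul, norm_exp_neg_I, one_mul, norm_neg, norm_mul]
      simp) convex_univ (Set.mem_univ t) (Set.mem_univ s)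
  simpa [Real.norm_eq_abs] using key

lemma kfun_lip (lam : ℝ) {r a b : ℝ} (hr : 0 < r) (ha : r ≤ a) (hb : r ≤ b) :
    ‖kfun lam a - kfun lam b‖ ≤ (|lam| * (4 * Real.pi * r)⁻¹ + (4 * Real.pi * r ^ 2)⁻¹) * |a - b| := by
  have ha0 : 0 < a := lt_of_lt_of_le hr ha
  have hb0 : 0 < b := lt_of_lt_of_le hr hb
  have hpi : (0:ℝ) < Real.pi := Real.pi_pos
  have hda : ((4 * Real.pi * a : ℝ) : ℂ) ≠ 0 := by
    exact_mod_cast (by positivity : (4 * Real.pi * a : ℝ) ≠ 0)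
  have hdb : ((4 * Real.pi * b : ℝ) : ℂ) ≠ 0 := by
    exact_mod_cast (by positivity : (4 * Real.pi * b : ℝ) ≠ 0)
  have split : kfun lam a - kfun lam b =
      (Complex.exp (-(Complex.I * lam * a)) - Complex.exp (-(Complex.I * lam * b))) /
        ((4 * Real.pi * a : ℝ) : ℂ) +
      Complex.exp (-(Complex.I * lam * b)) *
        (1 / ((4 * Real.pi * a : ℝ) : ℂ) - 1 / ((4 * Real.pi * b : ℝ) : ℂ)) := by
    rw [kfun, kfun]
    field_simp
    ring
  rw [split]
  have h1 : ‖(Complex.exp (-(Complex.I * lam * a)) - Complex.exp (-(Complex.I * lam * b))) /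
      ((4 * Real.pi * a : ℝ) : ℂ)‖ ≤ |lam| * |a - b| * (4 * Real.pi * r)⁻¹ := by
    rw [norm_div, Complex.norm_real, Real.norm_eq_abs, _root_.abs_of_nonneg (by positivity)]
    rw [div_eq_mul_inv]
    exact mul_le_mul (exp_I_lip lam a b)
      (inv_anti₀ (by positivity) (by gcongr))
      (by positivity) (by positivity)
  have h2 : ‖Complex.exp (-(Complex.I * lam * b)) *
      (1 / ((4 * Real.pi * a : ℝ) : ℂ) - 1 / ((4 * Real.pi * b : ℝ) : ℂ))‖ ≤
      (4 * Real.pi * r ^ 2)⁻¹ * |a - b| := by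
    rw [norm_mul, norm_exp_neg_I, one_mul]
    have hreal : (1:ℝ) / (4 * Real.pi * a) - 1 / (4 * Real.pi * b) =
        (b - a) / (4 * Real.pi * a * b) := by
      field_simp
    have : (1 / ((4 * Real.pi * a : ℝ) : ℂ) - 1 / ((4 * Real.pi * b : ℝ) : ℂ)) =
        (((b - a) / (4 * Real.pi * a * b) : ℝ) : ℂ) := by
      rw [← hreal]; push_cast; ring
    rw [this, Complex.norm_real, Real.norm_eq_abs, abs_div]
    rw [_root_.abs_of_nonneg (by positivity : (0:ℝ) ≤ 4 * Real.pi * a * b)]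
    rw [div_eq_mul_inv, abs_sub_comm b a, mul_comm]
    refine mul_le_mul_of_nonneg_right (inv_anti₀ (by positivity) ?_) (abs_nonneg _)
    have : r * r ≤ a * b := mul_le_mul ha hb hr.le ha0.le
    nlinarith [hpi]
  calc ‖_ + _‖ ≤ _ := norm_add_le _ _
    _ ≤ |lam| * |a - b| * (4 * Real.pi * r)⁻¹ + (4 * Real.pi * r ^ 2)⁻¹ * |a - b| :=
      add_le_add h1 h2
    _ = (|lam| * (4 * Real.pi * r)⁻¹ + (4 * Real.pi * r ^ 2)⁻¹) * |a - b| := by ring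

abbrev E3 := EuclideanSpace ℝ (Fin 3)

lemma meas_kernel (lam : ℝ) (x : E3) : Measurable fun y : E3 => resKernelNeg lam x y := by
  unfold resKernelNeg
  fun_prop

lemma tb_aux (S : Set (E3 →ᵇ ℂ))
    (C : ℝ) (hbd : ∀ f ∈ S, ∀ x, ‖f x‖ ≤ C)
    (hdecay : ∀ ε > (0:ℝ), ∃ R : ℝ, ∀ f ∈ S, ∀ x : E3, R ≤ ‖x‖ → ‖f x‖ ≤ ε)
    (hequi : ∀ ε > (0:ℝ), ∃ δ > (0:ℝ), ∀ f ∈ S, ∀ x x' : E3, dist x x' < δ → ‖f x - f x'‖ ≤ ε) :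
    TotallyBounded S := by
  rw [totallyBounded_iff]
  intro ε hε
  have hε5pos : 0 < ε / 5 := by linarith
  obtain ⟨R, hR⟩ := hdecay (ε / 5) hε5pos
  obtain ⟨δ, hδpos, hδ⟩ := hequi (ε / 5) hε5pos
  obtain ⟨t, htfin, htcover⟩ := totallyBounded_iff.1
    (isCompact_closedBall (0 : E3) (max R 0)).totallyBounded δ hδpos
  haveI : Fintype t := htfin.fintype
  set Ψ : (E3 →ᵇ ℂ) → (t → ℂ) := fun f z => f z.1 with hΨ
  have himgbd : Ψ '' S ⊆ closedBall 0 (max C 0) := by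
    rintro _ ⟨f, hf, rfl⟩
    rw [mem_closedBall, dist_zero_right]
    refine (pi_norm_le_iff_of_nonneg (le_max_right _ _)).2 fun z => ?_
    exact le_trans (hbd f hf z.1) (le_max_left _ _)
  have htb2 : TotallyBounded (Ψ '' S) :=
    ((isCompact_closedBall _ _).totallyBounded).subset himgbd
  obtain ⟨u, husub, hufin, hucover⟩ := totallyBounded_iff_subset.1 htb2
    {p | dist p.1 p.2 < ε / 5} (dist_mem_uniformity hε5pos)
  have hch : ∀ c ∈ u, ∃ f, f ∈ S ∧ Ψ f = c := by
    intro c hc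
    obtain ⟨f, hf, hfc⟩ := husub hc
    exact ⟨f, hf, hfc⟩
  choose! φ hφS hφΨ using hch
  refine ⟨φ '' u, hufin.image _, fun f hf => ?_⟩
  have hΨf : Ψ f ∈ ⋃ c ∈ u, {x | (x, c) ∈ {p : (t → ℂ) × (t → ℂ) | dist p.1 p.2 < ε / 5}} :=
    hucover (Set.mem_image_of_mem _ hf)
  rw [Set.mem_iUnion₂] at hΨf
  obtain ⟨c, hcu, hfc⟩ := hΨf
  have hfc : dist (Ψ f) c < ε / 5 := hfc
  set h := φ c with hh
  have hhS : h ∈ S := hφS c hcu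
  have hhc : Ψ h = c := hφΨ c hcu
  have key : ∀ x : E3, dist (f x) (h x) ≤ 4 * (ε / 5) := by
    intro x
    by_cases hx : ‖x‖ ≤ max R 0
    · have hxball : x ∈ closedBall (0 : E3) (max R 0) := by
        rwa [mem_closedBall, dist_zero_right]
      have := htcover hxball
      rw [Set.mem_iUnion₂] at this
      obtain ⟨z, hzt, hxz⟩ := this
      rw [mem_ball] at hxz
      have h1 : ‖f x - f z‖ ≤ ε / 5 := hδ f hf x z hxz
      have h3 : ‖h z - h x‖ ≤ ε / 5 := by
        refine hδ h hhS z x ?_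
        rwa [dist_comm]
      have h2 : dist (f z) (h z) < ε / 5 := by
        calc dist (f z) (h z) = dist ((Ψ f) ⟨z, hzt⟩) ((Ψ h) ⟨z, hzt⟩) := rfl
          _ ≤ dist (Ψ f) (Ψ h) := dist_le_pi_dist _ _ _
          _ < ε / 5 := by rw [hhc]; exact hfc
      calc dist (f x) (h x) ≤ dist (f x) (f z) + dist (f z) (h z) + dist (h z) (h x) :=
            dist_triangle4 _ _ _ _
        _ ≤ ε / 5 + ε / 5 + ε / 5 := by
            refine add_le_add (add_le_add ?_ h2.le) ?_
            · rwa [dist_eq_norm]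
            · rwa [dist_eq_norm]
        _ ≤ 4 * (ε / 5) := by linarith
    · push_neg at hx
      have hxR : R ≤ ‖x‖ := le_trans (le_max_left _ _) hx.le
      have := hR f hf x hxR
      have := hR h hhS x hxR
      calc dist (f x) (h x) ≤ ‖f x‖ + ‖h x‖ := dist_le_norm_add_norm _ _
        _ ≤ ε / 5 + ε / 5 := add_le_add (hR f hf x hxR) (hR h hhS x hxR)
        _ ≤ 4 * (ε / 5) := by linarith
  have : dist f h ≤ 4 * (ε / 5) :=
    (BoundedContinuousFunction.dist_le (by linarith)).2 key
  rw [Set.mem_iUnion₂]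
  exact ⟨h, Set.mem_image_of_mem _ hcu, by rw [mem_ball]; linarith⟩

set_option maxHeartbeats 2000000 in
set_option synthInstance.maxHeartbeats 1000000 in
/-- For a finite nonnegative compactly supported measure `V` on ℝ³
satisfying the local Kato condition, and any `λ ∈ ℝ`, the operator
`g ↦ ∫ e^{-iλ|x−y|}/(4π|x−y|) g(y) dV(y)` is a compact operator on the Banach
space of bounded continuous functions on ℝ³. -/
theorem stmt5 (V : Measure (EuclideanSpace ℝ (Fin 3))) [IsFiniteMeasure V]
    (hcpt : ∃ Kset : Set (EuclideanSpace ℝ (Fin 3)), IsCompact Kset ∧ V Ksetᶜ = 0)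
    (hlocal : Tendsto (fun r : ℝ => ⨆ y : EuclideanSpace ℝ (Fin 3),
        ∫⁻ x in ball y r, ENNReal.ofReal ‖x - y‖⁻¹ ∂V)
      (nhdsWithin 0 (Set.Ioi 0)) (nhds 0))
    (lam : ℝ) :
    ∃ T : (EuclideanSpace ℝ (Fin 3) →ᵇ ℂ) →L[ℂ] (EuclideanSpace ℝ (Fin 3) →ᵇ ℂ),
      (∀ (g : EuclideanSpace ℝ (Fin 3) →ᵇ ℂ) (x : EuclideanSpace ℝ (Fin 3)),
        T g x = ∫ y, resKernelNeg lam x y * g y ∂V) ∧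
      IsCompactOperator T := by
  classical
  obtain ⟨Kset, hKcpt, hKnull⟩ := hcpt
  set Φ : ℝ → ℝ≥0∞ := fun r => ⨆ y : E3, ∫⁻ x in ball y r, ENNReal.ofReal ‖x - y‖⁻¹ ∂V
    with hΦdef
  -- smallness of the local Kato quantity
  have hΦsmall : ∀ ε : ℝ≥0∞, 0 < ε → ∃ r > (0:ℝ), Φ r < ε := by
    intro ε hε
    have h2 := (hlocal.eventually (Iio_mem_nhds hε)).and
      (eventually_mem_nhdsWithin (s := Set.Ioi (0:ℝ)))
    obtain ⟨r, hr1, hr2⟩ := h2.exists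
    exact ⟨r, hr2, hr1⟩
  have hΦmono : ∀ {r1 r2 : ℝ}, r1 ≤ r2 → Φ r1 ≤ Φ r2 := by
    intro r1 r2 h
    exact iSup_mono fun y => lintegral_mono_set (ball_subset_ball h)
  -- the ball estimate around an arbitrary center
  have hballx : ∀ (x : E3) (r : ℝ),
      ∫⁻ y in ball x r, ENNReal.ofReal ‖x - y‖⁻¹ ∂V ≤ Φ r := by
    intro x r
    calc ∫⁻ y in ball x r, ENNReal.ofReal ‖x - y‖⁻¹ ∂V
        = ∫⁻ y in ball x r, ENNReal.ofReal ‖y - x‖⁻¹ ∂V :=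
          lintegral_congr fun y => by rw [norm_sub_rev]
      _ ≤ Φ r := le_iSup (fun c => ∫⁻ z in ball c r, ENNReal.ofReal ‖z - c‖⁻¹ ∂V) x
  -- the master bound
  have hmaster : ∀ (x : E3) (r : ℝ), 0 < r →
      ∫⁻ y, ENNReal.ofReal ‖x - y‖⁻¹ ∂V ≤ Φ r + ENNReal.ofReal r⁻¹ * V Set.univ := by
    intro x r hr
    rw [← lintegral_add_compl (fun y => ENNReal.ofReal ‖x - y‖⁻¹) (measurableSet_ball (x := x) (ε := r))]
    refine add_le_add (hballx x r) ?_
    calc ∫⁻ y in (ball x r)ᶜ, ENNReal.ofReal ‖x - y‖⁻¹ ∂V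
        ≤ ∫⁻ _ in (ball x r)ᶜ, ENNReal.ofReal r⁻¹ ∂V := by
          refine setLIntegral_mono measurable_const fun y hy => ?_
          refine ENNReal.ofReal_le_ofReal ?_
          have hxy : r ≤ ‖x - y‖ := by
            have := (mem_ball.not.mp hy)
            rw [dist_comm] at this
            push_neg at this
            simpa [dist_eq_norm] using this
          exact inv_anti₀ hr hxy
      _ = ENNReal.ofReal r⁻¹ * V (ball x r)ᶜ := setLIntegral_const _ _
      _ ≤ ENNReal.ofReal r⁻¹ * V Set.univ := by
          exact mul_le_mul_right (measure_mono (Set.subset_univ _)) _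
  obtain ⟨r0, hr0pos, hr0⟩ := hΦsmall 1 one_pos
  set B : ℝ≥0∞ := 1 + ENNReal.ofReal r0⁻¹ * V Set.univ with hBdef
  have hBne : B ≠ ⊤ := by
    refine ENNReal.add_ne_top.2 ⟨ENNReal.one_ne_top, ?_⟩
    exact ENNReal.mul_ne_top ENNReal.ofReal_ne_top (measure_ne_top V _)
  have hI : ∀ x : E3, ∫⁻ y, ENNReal.ofReal ‖x - y‖⁻¹ ∂V ≤ B := fun x =>
    (hmaster x r0 hr0pos).trans (add_le_add hr0.le le_rfl)
  -- kernel measurability and norm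
  have hmeasK : ∀ x : E3, Measurable fun y => resKernelNeg lam x y := fun x => meas_kernel lam x
  have hptnorm : ∀ x y : E3, ‖resKernelNeg lam x y‖ = (4 * Real.pi)⁻¹ * ‖x - y‖⁻¹ :=
    fun x y => norm_resKernelNeg lam x y
  -- the basic lintegral bound
  have hlint : ∀ (g : E3 →ᵇ ℂ) (x : E3),
      ∫⁻ y, ENNReal.ofReal ‖resKernelNeg lam x y * g y‖ ∂V ≤
        ENNReal.ofReal ((4 * Real.pi)⁻¹ * ‖g‖) * B := by
    intro g x
    calc ∫⁻ y, ENNReal.ofReal ‖resKernelNeg lam x y * g y‖ ∂V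
        ≤ ∫⁻ y, ENNReal.ofReal ((4 * Real.pi)⁻¹ * ‖g‖) * ENNReal.ofReal ‖x - y‖⁻¹ ∂V := by
          refine lintegral_mono fun y => ?_
          rw [← ENNReal.ofReal_mul (by positivity)]
          refine ENNReal.ofReal_le_ofReal ?_
          rw [norm_mul, hptnorm]
          calc (4 * Real.pi)⁻¹ * ‖x - y‖⁻¹ * ‖g y‖
              ≤ (4 * Real.pi)⁻¹ * ‖x - y‖⁻¹ * ‖g‖ := by
                refine mul_le_mul_of_nonneg_left (g.norm_coe_le_norm y) (by positivity)
            _ = (4 * Real.pi)⁻¹ * ‖g‖ * ‖x - y‖⁻¹ := by ring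
      _ = ENNReal.ofReal ((4 * Real.pi)⁻¹ * ‖g‖) * ∫⁻ y, ENNReal.ofReal ‖x - y‖⁻¹ ∂V :=
          lintegral_const_mul' _ _ ENNReal.ofReal_ne_top
      _ ≤ ENNReal.ofReal ((4 * Real.pi)⁻¹ * ‖g‖) * B := mul_le_mul_right (hI x) _
  -- integrability
  have hint : ∀ (g : E3 →ᵇ ℂ) (x : E3), Integrable (fun y => resKernelNeg lam x y * g y) V := by
    intro g x
    refine ⟨((hmeasK x).mul g.continuous.measurable).aestronglyMeasurable, ?_⟩
    rw [hasFiniteIntegral_iff_norm]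
    refine lt_of_le_of_lt (le_trans (le_of_eq rfl) (hlint g x)) ?_
    exact ENNReal.mul_lt_top ENNReal.ofReal_lt_top hBne.lt_top
  set Creal : ℝ := (4 * Real.pi)⁻¹ * B.toReal with hCrealdef
  have hCreal0 : 0 ≤ Creal := by
    refine mul_nonneg (by positivity) ENNReal.toReal_nonneg
  -- pointwise bound
  have hTb : ∀ (g : E3 →ᵇ ℂ) (x : E3),
      ‖∫ y, resKernelNeg lam x y * g y ∂V‖ ≤ Creal * ‖g‖ := by
    intro g x
    refine le_trans (norm_integral_le_lintegral_norm _) ?_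
    calc (∫⁻ y, ENNReal.ofReal ‖resKernelNeg lam x y * g y‖ ∂V).toReal
        ≤ (ENNReal.ofReal ((4 * Real.pi)⁻¹ * ‖g‖) * B).toReal := by
          refine ENNReal.toReal_mono ?_ (hlint g x)
          exact ENNReal.mul_ne_top ENNReal.ofReal_ne_top hBne
      _ = (4 * Real.pi)⁻¹ * ‖g‖ * B.toReal := by
          rw [ENNReal.toReal_mul, ENNReal.toReal_ofReal (by positivity)]
      _ = Creal * ‖g‖ := by rw [hCrealdef]; ring
  set vu : ℝ := (V Set.univ).toReal with hvudef
  have hvu0 : 0 ≤ vu := ENNReal.toReal_nonneg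
  have hVuniv : V Set.univ = ENNReal.ofReal vu := (ENNReal.ofReal_toReal (measure_ne_top V _)).symm
  -- equicontinuity modulus
  have hmod : ∀ ε > (0:ℝ), ∃ δ > (0:ℝ), ∀ (g : E3 →ᵇ ℂ) (x x' : E3), dist x x' < δ →
      ‖(∫ y, resKernelNeg lam x y * g y ∂V) - ∫ y, resKernelNeg lam x' y * g y ∂V‖ ≤ ε * ‖g‖ := by
    intro ε hε
    obtain ⟨r2, hr2pos, hr2Φ⟩ := hΦsmall (ENNReal.ofReal (Real.pi * ε))
      (ENNReal.ofReal_pos.mpr (by positivity))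
    set r : ℝ := r2 / 2 with hrdef
    have hrpos : 0 < r := by positivity
    set L : ℝ := |lam| * (4 * Real.pi * (r / 2))⁻¹ + (4 * Real.pi * (r / 2) ^ 2)⁻¹ with hLdef
    have hLpos : 0 < L := by positivity
    set δ : ℝ := min (r / 2) (ε / (2 * (L * vu + 1))) with hδdef
    have hδpos : 0 < δ := lt_min (by positivity) (by positivity)
    have hδr2 : δ ≤ r / 2 := min_le_left _ _
    have hδ3 : δ ≤ ε / (2 * (L * vu + 1)) := min_le_right _ _
    clear_value L δ
    refine ⟨δ, hδpos, fun g x x' hxx' => ?_⟩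
    have hsub : (∫ y, resKernelNeg lam x y * g y ∂V) - ∫ y, resKernelNeg lam x' y * g y ∂V
        = ∫ y, (resKernelNeg lam x y - resKernelNeg lam x' y) * g y ∂V := by
      rw [← integral_sub (hint g x) (hint g x')]
      congr 1
      funext y
      ring
    rw [hsub]
    refine le_trans (norm_integral_le_lintegral_norm _) ?_
    -- core kernel-difference estimate
    have hcore : ∫⁻ y, ENNReal.ofReal ‖resKernelNeg lam x y - resKernelNeg lam x' y‖ ∂V ≤
        ENNReal.ofReal ε := by
      rw [← lintegral_add_compl
        (fun y => ENNReal.ofReal ‖resKernelNeg lam x y - resKernelNeg lam x' y‖)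
        (measurableSet_ball (x := x) (ε := r))]
      have hterm1 : ∫⁻ y in ball x r,
          ENNReal.ofReal ‖resKernelNeg lam x y - resKernelNeg lam x' y‖ ∂V ≤
          ENNReal.ofReal (ε / 2) := by
        have hsplit : ∫⁻ y in ball x r,
            ENNReal.ofReal ‖resKernelNeg lam x y - resKernelNeg lam x' y‖ ∂V ≤
            (∫⁻ y in ball x r, ENNReal.ofReal ‖resKernelNeg lam x y‖ ∂V) +
            ∫⁻ y in ball x r, ENNReal.ofReal ‖resKernelNeg lam x' y‖ ∂V := by
          have hm : Measurable fun y : E3 => ENNReal.ofReal ‖resKernelNeg lam x y‖ :=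
            (hmeasK x).norm.ennreal_ofReal
          rw [← lintegral_add_left hm]
          refine lintegral_mono fun y => ?_
          rw [← ENNReal.ofReal_add (norm_nonneg _) (norm_nonneg _)]
          exact ENNReal.ofReal_le_ofReal (norm_sub_le _ _)
        refine le_trans hsplit ?_
        have hA : ∫⁻ y in ball x r, ENNReal.ofReal ‖resKernelNeg lam x y‖ ∂V ≤
            ENNReal.ofReal (4 * Real.pi)⁻¹ * ENNReal.ofReal (Real.pi * ε) := by
          calc ∫⁻ y in ball x r, ENNReal.ofReal ‖resKernelNeg lam x y‖ ∂V
              = ∫⁻ y in ball x r, ENNReal.ofReal (4 * Real.pi)⁻¹ * ENNReal.ofReal ‖x - y‖⁻¹ ∂V := by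
                refine lintegral_congr fun y => ?_
                rw [hptnorm, ENNReal.ofReal_mul (by positivity)]
            _ = ENNReal.ofReal (4 * Real.pi)⁻¹ * ∫⁻ y in ball x r, ENNReal.ofReal ‖x - y‖⁻¹ ∂V :=
                lintegral_const_mul' _ _ ENNReal.ofReal_ne_top
            _ ≤ ENNReal.ofReal (4 * Real.pi)⁻¹ * ENNReal.ofReal (Real.pi * ε) := by
                refine mul_le_mul_right (le_trans (hballx x r) ?_) _
                exact le_trans (hΦmono (by linarith : r ≤ r2)) hr2Φ.le
        have hB : ∫⁻ y in ball x r, ENNReal.ofReal ‖resKernelNeg lam x' y‖ ∂V ≤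
            ENNReal.ofReal (4 * Real.pi)⁻¹ * ENNReal.ofReal (Real.pi * ε) := by
          calc ∫⁻ y in ball x r, ENNReal.ofReal ‖resKernelNeg lam x' y‖ ∂V
              = ∫⁻ y in ball x r, ENNReal.ofReal (4 * Real.pi)⁻¹ * ENNReal.ofReal ‖x' - y‖⁻¹ ∂V := by
                refine lintegral_congr fun y => ?_
                rw [hptnorm, ENNReal.ofReal_mul (by positivity)]
            _ = ENNReal.ofReal (4 * Real.pi)⁻¹ * ∫⁻ y in ball x r, ENNReal.ofReal ‖x' - y‖⁻¹ ∂V :=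
                lintegral_const_mul' _ _ ENNReal.ofReal_ne_top
            _ ≤ ENNReal.ofReal (4 * Real.pi)⁻¹ * ∫⁻ y in ball x' r2, ENNReal.ofReal ‖x' - y‖⁻¹ ∂V := by
                refine mul_le_mul_right (lintegral_mono_set ?_) _
                intro y hy
                rw [mem_ball] at hy ⊢
                have htri : dist y x' ≤ dist y x + dist x x' := dist_triangle _ _ _
                have hxx'2 : dist x x' < r := lt_of_lt_of_le hxx' (by linarith)
                have h2r : r2 = 2 * r := by rw [hrdef]; ring
                linarith
            _ ≤ ENNReal.ofReal (4 * Real.pi)⁻¹ * ENNReal.ofReal (Real.pi * ε) :=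
                mul_le_mul_right (le_trans (hballx x' r2) hr2Φ.le) _
        refine le_trans (add_le_add hA hB) ?_
        rw [← mul_add, ← ENNReal.ofReal_add (by positivity) (by positivity),
          ← ENNReal.ofReal_mul (by positivity)]
        refine ENNReal.ofReal_le_ofReal (le_of_eq ?_)
        have hpi := Real.pi_pos
        field_simp
        ring
      have hterm2 : ∫⁻ y in (ball x r)ᶜ,
          ENNReal.ofReal ‖resKernelNeg lam x y - resKernelNeg lam x' y‖ ∂V ≤
          ENNReal.ofReal (ε / 2) := by
        have hpt : ∀ y ∈ (ball x r)ᶜ,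
            ENNReal.ofReal ‖resKernelNeg lam x y - resKernelNeg lam x' y‖ ≤
            ENNReal.ofReal (L * δ) := by
          intro y hy
          refine ENNReal.ofReal_le_ofReal ?_
          have hxy : r ≤ ‖x - y‖ := by
            have := (mem_ball.not.mp hy)
            rw [dist_comm] at this
            push_neg at this
            simpa [dist_eq_norm] using this
          have hx'y : r / 2 ≤ ‖x' - y‖ := by
            have h1 : ‖x - y‖ ≤ ‖x - x'‖ + ‖x' - y‖ := by
              calc ‖x - y‖ = ‖(x - x') + (x' - y)‖ := by abel_nf
                _ ≤ ‖x - x'‖ + ‖x' - y‖ := norm_add_le _ _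
            have h2 : ‖x - x'‖ < δ := by rwa [← dist_eq_norm]
            have h3 : δ ≤ r / 2 := hδr2
            linarith
          rw [resKernelNeg_eq, resKernelNeg_eq]
          have hlip := kfun_lip lam (r := r / 2) (by positivity)
            (le_trans (by linarith) hxy) hx'y
          refine le_trans hlip ?_
          rw [← hLdef]
          refine mul_le_mul_of_nonneg_left ?_ hLpos.le
          have habs : |‖x - y‖ - ‖x' - y‖| ≤ ‖(x - y) - (x' - y)‖ := abs_norm_sub_norm_le _ _
          have : (x - y) - (x' - y) = x - x' := by abel
          rw [this] at habs
          refine le_trans habs ?_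
          rw [← dist_eq_norm]
          exact hxx'.le
        calc ∫⁻ y in (ball x r)ᶜ,
            ENNReal.ofReal ‖resKernelNeg lam x y - resKernelNeg lam x' y‖ ∂V
            ≤ ∫⁻ _ in (ball x r)ᶜ, ENNReal.ofReal (L * δ) ∂V :=
              setLIntegral_mono measurable_const hpt
          _ = ENNReal.ofReal (L * δ) * V (ball x r)ᶜ := setLIntegral_const _ _
          _ ≤ ENNReal.ofReal (L * δ) * ENNReal.ofReal vu := by
              rw [← hVuniv]
              exact mul_le_mul_right (measure_mono (Set.subset_univ _)) _
          _ ≤ ENNReal.ofReal (ε / 2) := by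
              rw [← ENNReal.ofReal_mul (by positivity)]
              refine ENNReal.ofReal_le_ofReal ?_
              have hδ2 : δ ≤ ε / (2 * (L * vu + 1)) := hδ3
              have hq : (L * vu) / (L * vu + 1) ≤ 1 :=
                div_le_one_of_le₀ (by linarith) (by positivity)
              have h2 : δ * (2 * (L * vu + 1)) ≤ ε := (le_div_iff₀ (by positivity)).1 hδ2
              nlinarith [h2, hδpos.le, mul_nonneg (mul_nonneg hLpos.le hδpos.le) hvu0]
      refine le_trans (add_le_add hterm1 hterm2) ?_
      rw [← ENNReal.ofReal_add (by positivity) (by positivity)]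
      refine ENNReal.ofReal_le_ofReal (by linarith)
    -- conclude
    refine ENNReal.toReal_le_of_le_ofReal (by positivity) ?_
    calc ∫⁻ y, ENNReal.ofReal ‖(resKernelNeg lam x y - resKernelNeg lam x' y) * g y‖ ∂V
        ≤ ∫⁻ y, ENNReal.ofReal ‖g‖ *
            ENNReal.ofReal ‖resKernelNeg lam x y - resKernelNeg lam x' y‖ ∂V := by
          refine lintegral_mono fun y => ?_
          rw [← ENNReal.ofReal_mul (norm_nonneg _)]
          refine ENNReal.ofReal_le_ofReal ?_
          rw [norm_mul, mul_comm]
          exact mul_le_mul_of_nonneg_right (g.norm_coe_le_norm y) (norm_nonneg _)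
      _ = ENNReal.ofReal ‖g‖ *
            ∫⁻ y, ENNReal.ofReal ‖resKernelNeg lam x y - resKernelNeg lam x' y‖ ∂V :=
          lintegral_const_mul' _ _ ENNReal.ofReal_ne_top
      _ ≤ ENNReal.ofReal ‖g‖ * ENNReal.ofReal ε := mul_le_mul_right hcore _
      _ = ENNReal.ofReal (ε * ‖g‖) := by
          rw [← ENNReal.ofReal_mul (norm_nonneg _), mul_comm]
  -- decay at infinity
  obtain ⟨R0, hR0⟩ := hKcpt.isBounded.subset_closedBall (0 : E3)
  have hdecayT : ∀ ε > (0:ℝ), ∃ R : ℝ, ∀ (g : E3 →ᵇ ℂ), ‖g‖ ≤ 1 → ∀ x : E3, R ≤ ‖x‖ →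
      ‖∫ y, resKernelNeg lam x y * g y ∂V‖ ≤ ε := by
    intro ε hε
    set s : ℝ := vu / (4 * Real.pi * ε) + 1 with hsdef
    have hspos : 0 < s := by positivity
    have hs1 : vu / (4 * Real.pi * ε) + 1 = s := rfl
    clear_value s
    refine ⟨R0 + s, fun g hg x hx => ?_⟩
    have hae : ∀ᵐ y ∂V, y ∈ Kset := by
      rw [ae_iff]
      exact hKnull
    refine le_trans (norm_integral_le_lintegral_norm _) ?_
    refine ENNReal.toReal_le_of_le_ofReal hε.le ?_
    calc ∫⁻ y, ENNReal.ofReal ‖resKernelNeg lam x y * g y‖ ∂V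
        ≤ ∫⁻ _, ENNReal.ofReal ((4 * Real.pi)⁻¹ * s⁻¹) ∂V := by
          refine lintegral_mono_ae (hae.mono fun y hy => ?_)
          refine ENNReal.ofReal_le_ofReal ?_
          have hyK : ‖y‖ ≤ R0 := by
            have := hR0 hy
            rwa [mem_closedBall, dist_zero_right] at this
          have hxy : s ≤ ‖x - y‖ := by
            have h1 : ‖x‖ - ‖y‖ ≤ ‖x - y‖ := norm_sub_norm_le _ _
            linarith
          have hgy : ‖g y‖ ≤ 1 := le_trans (g.norm_coe_le_norm y) hg
          calc ‖resKernelNeg lam x y * g y‖ ≤ ‖resKernelNeg lam x y‖ := by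
                rw [norm_mul]
                exact mul_le_of_le_one_right (norm_nonneg _) hgy
            _ = (4 * Real.pi)⁻¹ * ‖x - y‖⁻¹ := hptnorm x y
            _ ≤ (4 * Real.pi)⁻¹ * s⁻¹ := by
                refine mul_le_mul_of_nonneg_left (inv_anti₀ hspos hxy) (by positivity)
      _ = ENNReal.ofReal ((4 * Real.pi)⁻¹ * s⁻¹) * V Set.univ := lintegral_const _
      _ ≤ ENNReal.ofReal ε := by
          rw [hVuniv, ← ENNReal.ofReal_mul (by positivity)]
          refine ENNReal.ofReal_le_ofReal ?_
          have hkey : vu ≤ 4 * Real.pi * ε * s := by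
            have heq : 4 * Real.pi * ε * s = vu + 4 * Real.pi * ε := by
              rw [← hs1]
              have hpi := Real.pi_pos
              field_simp
            have : 0 < 4 * Real.pi * ε := by positivity
            linarith
          have heq2 : (4 * Real.pi)⁻¹ * s⁻¹ * vu = vu / (4 * Real.pi * s) := by
            rw [div_eq_mul_inv, mul_inv]
            ring
          rw [heq2, div_le_iff₀ (by positivity)]
          nlinarith [Real.pi_pos]
  -- continuity of T g
  have hcont : ∀ g : E3 →ᵇ ℂ, Continuous fun x => ∫ y, resKernelNeg lam x y * g y ∂V := by
    intro g
    rw [Metric.continuous_iff]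
    intro x ε hε
    obtain ⟨δ, hδpos, hδ⟩ := hmod (ε / (‖g‖ + 1)) (by positivity)
    refine ⟨δ, hδpos, fun x' hx' => ?_⟩
    rw [dist_eq_norm]
    calc ‖(∫ y, resKernelNeg lam x' y * g y ∂V) - ∫ y, resKernelNeg lam x y * g y ∂V‖
        ≤ (ε / (‖g‖ + 1)) * ‖g‖ := hδ g x' x hx'
      _ < ε := by
          rw [div_mul_eq_mul_div, div_lt_iff₀ (by positivity)]
          have h1 : 0 ≤ ‖g‖ := norm_nonneg g
          nlinarith
  -- build the operator
  set Tb : (E3 →ᵇ ℂ) → (E3 →ᵇ ℂ) := fun g =>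
    BoundedContinuousFunction.ofNormedAddCommGroup
      (fun x => ∫ y, resKernelNeg lam x y * g y ∂V) (hcont g) (Creal * ‖g‖) (hTb g) with hTbdef
  have hTbapp : ∀ (g : E3 →ᵇ ℂ) (x : E3), Tb g x = ∫ y, resKernelNeg lam x y * g y ∂V :=
    fun g x => rfl
  set TL : (E3 →ᵇ ℂ) →ₗ[ℂ] (E3 →ᵇ ℂ) :=
    { toFun := Tb
      map_add' := by
        intro g g'
        ext x
        simp only [hTbapp, BoundedContinuousFunction.coe_add, Pi.add_apply]
        calc ∫ y, resKernelNeg lam x y * (g y + g' y) ∂V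
            = ∫ y, (resKernelNeg lam x y * g y + resKernelNeg lam x y * g' y) ∂V := by
              congr 1
              funext y
              ring
          _ = (∫ y, resKernelNeg lam x y * g y ∂V) + ∫ y, resKernelNeg lam x y * g' y ∂V :=
              integral_add (hint g x) (hint g' x)
      map_smul' := by
        intro c g
        ext x
        simp only [hTbapp, BoundedContinuousFunction.coe_smul, Pi.smul_apply, RingHom.id_apply,
          smul_eq_mul]
        calc ∫ y, resKernelNeg lam x y * (c * g y) ∂V
            = ∫ y, c • (resKernelNeg lam x y * g y) ∂V := by
              congr 1
              funext y
              simp only [smul_eq_mul]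
              ring
          _ = c • ∫ y, resKernelNeg lam x y * g y ∂V := integral_smul c _
          _ = c * ∫ y, resKernelNeg lam x y * g y ∂V := rfl } with hTLdef
  set T : (E3 →ᵇ ℂ) →L[ℂ] (E3 →ᵇ ℂ) := TL.mkContinuous Creal (fun g => by
    refine (BoundedContinuousFunction.norm_le (by positivity)).2 fun x => ?_
    exact hTb g x) with hTdef
  have hTapp : ∀ (g : E3 →ᵇ ℂ) (x : E3), T g x = ∫ y, resKernelNeg lam x y * g y ∂V :=
    fun g x => rfl
  refine ⟨T, hTapp, ?_⟩
  -- compactness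
  have htb : TotallyBounded (⇑T '' ball 0 1) := by
    refine tb_aux _ Creal ?_ ?_ ?_
    · rintro _ ⟨g, hg, rfl⟩ x
      have hgnorm : ‖g‖ ≤ 1 := by
        rw [mem_ball, dist_zero_right] at hg
        exact hg.le
      calc ‖T g x‖ ≤ Creal * ‖g‖ := by rw [hTapp]; exact hTb g x
        _ ≤ Creal * 1 := mul_le_mul_of_nonneg_left hgnorm hCreal0
        _ = Creal := mul_one _
    · intro ε hε
      obtain ⟨R, hR⟩ := hdecayT ε hε
      refine ⟨R, ?_⟩
      rintro _ ⟨g, hg, rfl⟩ x hx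
      have hgnorm : ‖g‖ ≤ 1 := by
        rw [mem_ball, dist_zero_right] at hg
        exact hg.le
      rw [hTapp]
      exact hR g hgnorm x hx
    · intro ε hε
      obtain ⟨δ, hδpos, hδ⟩ := hmod ε hε
      refine ⟨δ, hδpos, ?_⟩
      rintro _ ⟨g, hg, rfl⟩ x x' hxx'
      have hgnorm : ‖g‖ ≤ 1 := by
        rw [mem_ball, dist_zero_right] at hg
        exact hg.le
      rw [hTapp, hTapp]
      calc ‖(∫ y, resKernelNeg lam x y * g y ∂V) - ∫ y, resKernelNeg lam x' y * g y ∂V‖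
          ≤ ε * ‖g‖ := hδ g x x' hxx'
        _ ≤ ε * 1 := mul_le_mul_of_nonneg_left hgnorm hε.le
        _ = ε := mul_one _
  have hcl : IsCompact (closure (⇑T '' ball 0 1)) :=
    htb.closure.isCompact_of_isClosed isClosed_closure
  have := (isCompactOperator_iff_isCompact_closure_image_ball
    (𝕜₁ := ℂ) (T : (E3 →ᵇ ℂ) →ₗ[ℂ] (E3 →ᵇ ℂ)) one_pos).2
  simp only [ContinuousLinearMap.coe_coe] at this
  exact this hcl
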